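/- arXiv:math/0612710 — 2 statements merged into one kernel-verified Lean document; each statement's English description precedes it below -/
import Mathlib

section
/- Suppose for each t ≥ 0 the random typed mass-partition (X_n(t), T_n(t))_{n≥1} has Σ_n X_n(t) ≤ 1, and suppose the martingale convergence M(θ,t) → M(θ,∞) of Theorem 4 holds with M(θ,∞) > 0 a.s. and min_j v_j(θ) > 0, for θ in a neighborhood of θ̄ where θ̄ maximizes φ(θ)/(θ+1). Then almost surely lim_{t→∞} t^{-1} log X_1(t) = −φ'(θ̄), where X_1(t) = max_n X_n(t) is the largest fragment mass at time t. -/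
/-!
Fix a sample path on which `M(θ̄, t)` and `M(θₙ, t)` converge to positive limits along a
sequence `θₙ ↓ θ̄` (countably many almost-sure events). Keeping only the largest fragment,
`v_min x₁(t)^{θ̄+1} ≤ e^{-tφ(θ̄)} M(θ̄, t)`, so `t⁻¹ log x₁(t) ≤ -φ(θ̄)/(θ̄+1) + o(1) = -φ'(θ̄) + o(1)`.
Conversely, for `θ > θ̄` every `x_n ≤ x₁` gives
`M(θ, t) ≲ x₁(t)^{θ-θ̄} e^{t(φ(θ) - φ(θ̄))} M(θ̄, t)`, and since `M(θ, t)` stays away from `0`,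
`t⁻¹ log x₁(t) ≥ -(φ(θ) - φ(θ̄))/(θ - θ̄) - o(1)`; the slope tends to `φ'(θ̄)` as `θ ↓ θ̄`.
-/

open MeasureTheory Filter Set Real Topology

lemma exists_pos_le_of_finite {ι : Type*} [Finite ι] {w : ι → ℝ} (hw : ∀ j, 0 < w j) :
    ∃ a, 0 < a ∧ ∀ j, a ≤ w j := by
  cases isEmpty_or_nonempty ι
  · exact ⟨1, one_pos, isEmptyElim⟩
  · obtain ⟨j₀, hj₀⟩ := Finite.exists_min w
    exact ⟨w j₀, hw j₀, hj₀⟩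

lemma eventually_div_lt_of_le_add_mul {f : ℝ → ℝ} {K c b : ℝ} (hcb : c < b)
    (hf : ∀ᶠ t in atTop, f t ≤ K + c * t) : ∀ᶠ t in atTop, f t / t < b := by
  filter_upwards [hf, eventually_gt_atTop (K / (b - c)), eventually_gt_atTop 0]
    with t hft hKt ht
  rw [div_lt_iff₀ ht]
  rw [div_lt_iff₀ (sub_pos.2 hcb)] at hKt
  linarith

lemma eventually_lt_div_of_add_mul_le {f : ℝ → ℝ} {K c b : ℝ} (hbc : b < c)
    (hf : ∀ᶠ t in atTop, K + c * t ≤ f t) : ∀ᶠ t in atTop, b < f t / t := by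
  have hneg : ∀ᶠ t in atTop, -f t ≤ -K + -c * t := hf.mono fun t ht => by linarith
  filter_upwards [eventually_div_lt_of_le_add_mul (neg_lt_neg hbc) hneg] with t ht
  rw [neg_div] at ht
  linarith

section WeightedPowerSums

variable {ι : Type*} {y : ℕ → ℝ} {τ : ℕ → ι} {w : ι → ℝ} {r : ℝ}

lemma mul_rpow_le_tsum {a : ℝ} (hy : ∀ n, 0 ≤ y n) (hw : ∀ j, a ≤ w j) (hw0 : ∀ j, 0 ≤ w j)
    (hs : Summable fun n => w (τ n) * y n ^ r) (n : ℕ) :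
    a * y n ^ r ≤ ∑' m, w (τ m) * y m ^ r :=
  (mul_le_mul_of_nonneg_right (hw _) (rpow_nonneg (hy n) _)).trans
    (hs.le_tsum n fun m _ => mul_nonneg (hw0 _) (rpow_nonneg (hy m) _))

lemma tsum_mul_rpow_le_of_le_max {u : ι → ℝ} {a B s : ℝ} (hr : 0 < r) (hrs : r ≤ s)
    (hy : ∀ n, 0 ≤ y n) (hymax : ∀ n, y n ≤ y 0) (ha : 0 < a) (hw : ∀ j, a ≤ w j)
    (hu : ∀ j, 0 ≤ u j) (huB : ∀ j, u j ≤ B) (hs : Summable fun n => w (τ n) * y n ^ r) :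
    ∑' n, u (τ n) * y n ^ s ≤ B / a * y 0 ^ (s - r) * ∑' n, w (τ n) * y n ^ r := by
  have hB : 0 ≤ B := (hu (τ 0)).trans (huB _)
  have hterm : ∀ n, u (τ n) * y n ^ s ≤ B / a * y 0 ^ (s - r) * (w (τ n) * y n ^ r) := by
    intro n
    have hsplit : y n ^ s = y n ^ (s - r) * y n ^ r := by
      rw [← rpow_add' (hy n) (by linarith), sub_add_cancel]
    have hpow : y n ^ (s - r) ≤ y 0 ^ (s - r) :=
      rpow_le_rpow (hy n) (hymax n) (sub_nonneg.2 hrs)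
    have hyr : 0 ≤ y n ^ r := rpow_nonneg (hy n) r
    calc u (τ n) * y n ^ s ≤ B * (y 0 ^ (s - r) * y n ^ r) := by
          rw [hsplit]
          exact mul_le_mul (huB _) (mul_le_mul_of_nonneg_right hpow hyr)
            (mul_nonneg (rpow_nonneg (hy n) _) hyr) hB
      _ = B / a * y 0 ^ (s - r) * (a * y n ^ r) := by field_simp
      _ ≤ B / a * y 0 ^ (s - r) * (w (τ n) * y n ^ r) := by
          have hy₀ : 0 ≤ y 0 ^ (s - r) := rpow_nonneg ((hy n).trans (hymax n)) _
          gcongr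
          exact hw _
  have hs' := hs.mul_left (B / a * y 0 ^ (s - r))
  calc ∑' n, u (τ n) * y n ^ s ≤ ∑' n, B / a * y 0 ^ (s - r) * (w (τ n) * y n ^ r) :=
        (hs'.of_nonneg_of_le (fun n => mul_nonneg (hu _) (rpow_nonneg (hy n) _)) hterm).tsum_le_tsum
          hterm hs'
    _ = B / a * y 0 ^ (s - r) * ∑' n, w (τ n) * y n ^ r := tsum_mul_left

end WeightedPowerSums

section AdditiveMartingale

variable {ι : Type*} (x : ℝ → ℕ → ℝ) (τ : ℝ → ℕ → ι) (φ : ℝ → ℝ) (v : ℝ → ι → ℝ)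

/-- The martingale `M(θ, t)` evaluated along a single sample path `(x, τ)`. -/
noncomputable def additiveMartingale (θ t : ℝ) : ℝ :=
  exp (t * φ θ) * ∑' n, v θ (τ t n) * x t n ^ (θ + 1)

variable {x τ φ v}

lemma summable_of_additiveMartingale_pos {θ t : ℝ} (h : 0 < additiveMartingale x τ φ v θ t) :
    Summable fun n => v θ (τ t n) * x t n ^ (θ + 1) := by
  by_contra hns
  rw [additiveMartingale, tsum_eq_zero_of_not_summable hns, mul_zero] at h
  exact h.false

lemma eventually_log_div_lt {θ a L b : ℝ} (hθ : 0 < θ + 1) (hx : ∀ t n, 0 ≤ x t n)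
    (hx₀ : ∀ t, 0 < x t 0) (ha : 0 < a) (hva : ∀ j, a ≤ v θ j)
    (hM : Tendsto (additiveMartingale x τ φ v θ) atTop (𝓝 L)) (hL : 0 < L)
    (hb : -(φ θ / (θ + 1)) < b) :
    ∀ᶠ t in atTop, log (x t 0) / t < b := by
  refine eventually_div_lt_of_le_add_mul (K := (log (L + 1) - log a) / (θ + 1)) hb ?_
  filter_upwards [hM.eventually_lt_const (lt_add_one L), hM.eventually_const_lt hL]
    with t hlt hpos
  have hfrag : exp (t * φ θ) * (a * x t 0 ^ (θ + 1)) < L + 1 :=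
    (mul_le_mul_of_nonneg_left
      (mul_rpow_le_tsum (hx t) hva (fun j => ha.le.trans (hva j))
        (summable_of_additiveMartingale_pos hpos) 0) (exp_pos _).le).trans_lt hlt
  have hlog := log_lt_log (by have := hx₀ t; positivity) hfrag
  rw [log_mul (exp_pos _).ne' (by have := hx₀ t; positivity), log_exp,
    log_mul ha.ne' (rpow_pos_of_pos (hx₀ t) _).ne', log_rpow (hx₀ t)] at hlog
  have hcancel : φ θ / (θ + 1) * t * (θ + 1) = φ θ * t := by field_simp
  rw [div_add' _ _ _ hθ.ne', le_div_iff₀ hθ]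
  linarith

lemma eventually_lt_log_div {θ θ' a B L L' b : ℝ} (hθ : 0 < θ + 1) (hθθ' : θ < θ')
    (hx : ∀ t n, 0 ≤ x t n) (hxmax : ∀ t n, x t n ≤ x t 0) (hx₀ : ∀ t, 0 < x t 0)
    (ha : 0 < a) (hva : ∀ j, a ≤ v θ j) (hv' : ∀ j, 0 ≤ v θ' j) (hB : 0 < B)
    (hvB : ∀ j, v θ' j ≤ B)
    (hM : Tendsto (additiveMartingale x τ φ v θ) atTop (𝓝 L)) (hL : 0 < L)
    (hM' : Tendsto (additiveMartingale x τ φ v θ') atTop (𝓝 L')) (hL' : 0 < L')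
    (hb : b < -slope φ θ θ') :
    ∀ᶠ t in atTop, b < log (x t 0) / t := by
  have hp : 0 < θ' - θ := sub_pos.2 hθθ'
  refine eventually_lt_div_of_add_mul_le
    (K := (log (L' / 2) - log (B / a * (L + 1))) / (θ' - θ)) hb ?_
  filter_upwards [hM.eventually_lt_const (lt_add_one L), hM.eventually_const_lt hL,
    hM'.eventually_const_lt (half_lt_self hL')] with t hlt hpos hpos'
  have hX := hx₀ t
  have hcmp : L' / 2 < B / a * (L + 1) * x t 0 ^ (θ' - θ) * exp (t * (φ θ' - φ θ)) :=
    calc L' / 2 < additiveMartingale x τ φ v θ' t := hpos'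
      _ ≤ exp (t * φ θ') *
            (B / a * x t 0 ^ (θ' - θ) * ∑' n, v θ (τ t n) * x t n ^ (θ + 1)) := by
          refine mul_le_mul_of_nonneg_left ?_ (exp_pos _).le
          have h := tsum_mul_rpow_le_of_le_max (r := θ + 1) (s := θ' + 1) hθ (by linarith)
            (hx t) (hxmax t) ha hva hv' hvB (summable_of_additiveMartingale_pos hpos)
          rwa [add_sub_add_right_eq_sub] at h
      _ = B / a * x t 0 ^ (θ' - θ) * exp (t * (φ θ' - φ θ)) *
            additiveMartingale x τ φ v θ t := by
          rw [additiveMartingale, mul_sub, exp_sub]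
          field_simp
      _ ≤ B / a * (L + 1) * x t 0 ^ (θ' - θ) * exp (t * (φ θ' - φ θ)) := by
          have := rpow_pos_of_pos hX (θ' - θ)
          rw [mul_right_comm _ (L + 1), mul_right_comm _ (L + 1)]
          gcongr
  have hlog := log_lt_log (by positivity) hcmp
  rw [log_mul (by positivity) (exp_pos _).ne', log_exp,
    log_mul (by positivity) (rpow_pos_of_pos hX _).ne', log_rpow hX] at hlog
  have hslope : -slope φ θ θ' * t * (θ' - θ) = -(t * (φ θ' - φ θ)) := by
    rw [slope_def_field]
    field_simp
  rw [div_add' _ _ _ hp.ne', div_le_iff₀ hp]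
  linarith

theorem tendsto_log_largest_div_of_additiveMartingale [Finite ι] {θb c L : ℝ}
    (hθb : 0 < θb + 1) (hx : ∀ t n, 0 ≤ x t n) (hxmax : ∀ t n, x t n ≤ x t 0)
    (hx₀ : ∀ t, 0 < x t 0) (hφ : HasDerivAt φ c θb) (hcrit : φ θb = (θb + 1) * c)
    (hv : ∀ j, 0 < v θb j) (hM : Tendsto (additiveMartingale x τ φ v θb) atTop (𝓝 L))
    (hL : 0 < L)
    (hright : ∃ᶠ θ in 𝓝[>] θb, (∀ j, 0 ≤ v θ j) ∧
      ∃ L', 0 < L' ∧ Tendsto (additiveMartingale x τ φ v θ) atTop (𝓝 L')) :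
    Tendsto (fun t => log (x t 0) / t) atTop (𝓝 (-c)) := by
  obtain ⟨a, ha, hva⟩ := exists_pos_le_of_finite hv
  refine tendsto_order.2 ⟨fun b hb => ?_, fun b hb => ?_⟩
  · have hslope : ∀ᶠ θ in 𝓝[>] θb, b < -slope φ θb θ :=
      ((hasDerivWithinAt_iff_tendsto_slope' (lt_irrefl θb)).1 hφ.hasDerivWithinAt).neg
        |>.eventually_const_lt hb
    obtain ⟨θ, ⟨hv', L', hL', hM'⟩, hbθ, hθ⟩ :=
      (hright.and_eventually (hslope.and self_mem_nhdsWithin)).exists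
    obtain ⟨B, hB⟩ := (Set.finite_range (v θ)).bddAbove
    exact eventually_lt_log_div hθb hθ hx hxmax hx₀ ha hva hv' (lt_max_of_lt_right one_pos)
      (fun j => (hB (mem_range_self j)).trans (le_max_left _ _)) hM hL hM' hL' hbθ
  · exact eventually_log_div_lt hθb hx hx₀ ha hva hM hL
      (by rwa [hcrit, mul_div_cancel_left₀ _ hθb.ne'])

end AdditiveMartingale

theorem stmt13_general (k : ℕ) {Ω : Type*} [MeasurableSpace Ω]
    (μ : Measure Ω)
    (X : ℝ → Ω → ℕ → ℝ) (T : ℝ → Ω → ℕ → Fin k)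
    (hX0 : ∀ t ω n, 0 ≤ X t ω n)
    (hXmax : ∀ t ω n, X t ω n ≤ X t ω 0) (hX1pos : ∀ t ω, 0 < X t ω 0)
    (φ : ℝ → ℝ) (v : ℝ → Fin k → ℝ) (θb ε : ℝ) (hθb : 0 ≤ θb) (hε : 0 < ε)
    (hφdiff : ∀ θ ∈ Ioo (θb - ε) (θb + ε), DifferentiableAt ℝ φ θ)
    (hvpos : ∀ θ ∈ Ioo (θb - ε) (θb + ε), ∀ j, 0 < v θ j)
    (hcrit : φ θb = (θb + 1) * deriv φ θb)
    (Mlim : ℝ → Ω → ℝ)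
    (hconv : ∀ θ ∈ Ioo (θb - ε) (θb + ε), ∀ᵐ ω ∂μ,
      Tendsto (fun t => Real.exp (t * φ θ) * ∑' n, v θ (T t ω n) * X t ω n ^ (θ + 1))
        atTop (nhds (Mlim θ ω)) ∧ 0 < Mlim θ ω) :
    ∀ᵐ ω ∂μ,
      Tendsto (fun t => Real.log (X t ω 0) / t) atTop (nhds (-(deriv φ θb))) := by
  have hθb_mem : θb ∈ Ioo (θb - ε) (θb + ε) := ⟨by linarith, by linarith⟩
  obtain ⟨u, -, hu, hu_lim⟩ := exists_seq_strictAnti_tendsto' (lt_add_of_pos_right θb hε)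
  have hu_mem : ∀ n, u n ∈ Ioo (θb - ε) (θb + ε) := fun n => ⟨by linarith [(hu n).1], (hu n).2⟩
  have hu_right : Tendsto u atTop (𝓝[>] θb) :=
    tendsto_nhdsWithin_iff.2 ⟨hu_lim, Eventually.of_forall fun n => (hu n).1⟩
  filter_upwards [hconv θb hθb_mem, ae_all_iff.2 fun n => hconv (u n) (hu_mem n)]
    with ω hω hωu
  exact tendsto_log_largest_div_of_additiveMartingale (by linarith) (hX0 · ω) (hXmax · ω)
    (hX1pos · ω) (hφdiff θb hθb_mem).hasDerivAt hcrit (hvpos θb hθb_mem) hω.1 hω.2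
    (hu_right.frequently (Frequently.of_forall fun n =>
      ⟨fun j => (hvpos _ (hu_mem n) j).le, _, (hωu n).2, (hωu n).1⟩))

/-- Decay rate of the largest fragment: if the Biggins-type martingales
`M(θ,t) = e^{tφ(θ)} Σ_n v_{T_n(t)}(θ) X_n(t)^{θ+1}` converge to a strictly positive
limit, with positive eigenvectors `v(θ)`, for `θ` in a neighborhood of the point `θ̄`
maximizing `φ(θ)/(θ+1)` (so that `φ(θ̄) = (θ̄+1)φ'(θ̄)`), then almost surely
`t⁻¹ log X₁(t) → −φ'(θ̄)` where `X₁(t) = X t ω 0` is the largest fragment mass. -/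
theorem stmt13 (k : ℕ) {Ω : Type*} [MeasurableSpace Ω]
    (μ : Measure Ω) [IsProbabilityMeasure μ]
    (X : ℝ → Ω → ℕ → ℝ) (T : ℝ → Ω → ℕ → Fin k)
    (hX0 : ∀ t ω n, 0 ≤ X t ω n) (hXsum : ∀ t ω, (∑' n, X t ω n) ≤ 1)
    (hXmax : ∀ t ω n, X t ω n ≤ X t ω 0) (hX1pos : ∀ t ω, 0 < X t ω 0)
    (φ : ℝ → ℝ) (v : ℝ → Fin k → ℝ) (θb ε : ℝ) (hθb : 0 ≤ θb) (hε : 0 < ε)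
    (hφdiff : ∀ θ ∈ Ioo (θb - ε) (θb + ε), DifferentiableAt ℝ φ θ)
    (hvpos : ∀ θ ∈ Ioo (θb - ε) (θb + ε), ∀ j, 0 < v θ j)
    (hmax : ∀ θ ∈ Ioo (θb - ε) (θb + ε), φ θ / (θ + 1) ≤ φ θb / (θb + 1))
    (hcrit : φ θb = (θb + 1) * deriv φ θb)
    (Mlim : ℝ → Ω → ℝ)
    (hconv : ∀ θ ∈ Ioo (θb - ε) (θb + ε), ∀ᵐ ω ∂μ,
      Tendsto (fun t => Real.exp (t * φ θ) * ∑' n, v θ (T t ω n) * X t ω n ^ (θ + 1))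
        atTop (nhds (Mlim θ ω)) ∧ 0 < Mlim θ ω) :
    ∀ᵐ ω ∂μ,
      Tendsto (fun t => Real.log (X t ω 0) / t) atTop (nhds (-(deriv φ θb))) :=
  stmt13_general k μ X T hX0 hXmax hX1pos φ v θb ε hθb hε hφdiff hvpos hcrit Mlim hconv
end

section
/- Let A(θ) be a family of k×k irreducible nonnegative matrices depending on a real parameter θ, with entries of the form A(θ)_{ij} = ∫ e^{−θx} m_{ij}(dx) for finite measures m_{ij} on ℝ, not all concentrated at 0. Then θ ↦ log ρ(A(θ)) is a convex function of θ, where ρ denotes the Perron–Frobenius (spectral radius) eigenvalue. -/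
open MeasureTheory Set Matrix

/-!
Each entry `θ ↦ A θ i j` is a Laplace transform, hence log-convex by Hölder's inequality.
Maximising the Collatz–Wielandt function gives a positive eigenvector `z θ` of `A θ` with
eigenvalue `r θ`, and `r θ` is the spectral radius because any positive `w` with `A w ≤ c w`
bounds every eigenvalue by `c`. For `θ = a θ₀ + b θ₁`, Hölder's inequality for finite sums shows
that `w = z θ₀ ^ a * z θ₁ ^ b` satisfies `A θ w ≤ (r θ₀ ^ a * r θ₁ ^ b) w`, so
`r θ ≤ r θ₀ ^ a * r θ₁ ^ b`, which is the convexity of `log r`.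
-/

theorem integral_rpow_mul_rpow_le {α : Type*} [MeasurableSpace α] {μ : Measure α}
    {f g : α → ℝ} (hf₀ : 0 ≤ᵐ[μ] f) (hg₀ : 0 ≤ᵐ[μ] g) (hf : Integrable f μ)
    (hg : Integrable g μ) {p q : ℝ} (hp : 0 ≤ p) (hq : 0 ≤ q) (hpq : p + q = 1) :
    ∫ a, f a ^ p * g a ^ q ∂μ ≤ (∫ a, f a ∂μ) ^ p * (∫ a, g a ∂μ) ^ q := by
  have hofReal : (fun a => ENNReal.ofReal (f a ^ p * g a ^ q)) =ᵐ[μ]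
      fun a => ENNReal.ofReal (f a) ^ p * ENNReal.ofReal (g a) ^ q := by
    filter_upwards [hf₀, hg₀] with a hfa hga
    rw [ENNReal.ofReal_mul (Real.rpow_nonneg hfa p), ENNReal.ofReal_rpow_of_nonneg hfa hp,
      ENNReal.ofReal_rpow_of_nonneg hga hq]
  have hfg₀ : 0 ≤ᵐ[μ] fun a => f a ^ p * g a ^ q := by
    filter_upwards [hf₀, hg₀] with a hfa hga
    exact mul_nonneg (Real.rpow_nonneg hfa p) (Real.rpow_nonneg hga q)
  have hfg : AEStronglyMeasurable (fun a => f a ^ p * g a ^ q) μ :=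
    ((hf.aemeasurable.pow_const p).mul (hg.aemeasurable.pow_const q)).aestronglyMeasurable
  rw [integral_eq_lintegral_of_nonneg_ae hfg₀ hfg, integral_eq_lintegral_of_nonneg_ae hf₀ hf.1,
    integral_eq_lintegral_of_nonneg_ae hg₀ hg.1, ENNReal.toReal_rpow, ENNReal.toReal_rpow,
    ← ENNReal.toReal_mul, lintegral_congr_ae hofReal]
  refine ENNReal.toReal_mono ?_ (ENNReal.lintegral_mul_norm_pow_le
    hf.aemeasurable.ennreal_ofReal hg.aemeasurable.ennreal_ofReal hp hq hpq)
  exact ENNReal.mul_ne_top (ENNReal.rpow_ne_top_of_nonneg hp hf.lintegral_lt_top.ne)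
    (ENNReal.rpow_ne_top_of_nonneg hq hg.lintegral_lt_top.ne)

theorem Finset.sum_rpow_mul_rpow_le {ι : Type*} [Fintype ι] {f g : ι → ℝ} (hf : 0 ≤ f)
    (hg : 0 ≤ g) {p q : ℝ} (hp : 0 ≤ p) (hq : 0 ≤ q) (hpq : p + q = 1) :
    ∑ i, f i ^ p * g i ^ q ≤ (∑ i, f i) ^ p * (∑ i, g i) ^ q := by
  let : MeasurableSpace ι := ⊤
  have : DiscreteMeasurableSpace ι := ⟨fun _ => trivial⟩
  simpa only [integral_count] using integral_rpow_mul_rpow_le (μ := .count) (.of_forall hf)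
    (.of_forall hg) .of_finite .of_finite hp hq hpq

namespace Matrix

theorem mem_spectrum_iff_exists_mulVec_eq_smul {ι K : Type*} [Fintype ι] [DecidableEq ι]
    [Field K] {B : Matrix ι ι K} {μ : K} :
    μ ∈ spectrum K B ↔ ∃ v ≠ 0, B *ᵥ v = μ • v := by
  rw [← Matrix.spectrum_toLin', ← Module.End.hasEigenvalue_iff_mem_spectrum]
  constructor
  · intro h
    obtain ⟨v, hv⟩ := h.exists_hasEigenvector
    exact ⟨v, hv.2, hv.apply_eq_smul⟩
  · rintro ⟨v, hv, h⟩
    exact Module.End.hasEigenvalue_of_hasEigenvector (x := v)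
      ⟨Module.End.mem_eigenspace_iff.2 h, hv⟩

variable {ι : Type*} [Fintype ι] {B : Matrix ι ι ℝ}

theorem exists_sum_range_pow_pos [DecidableEq ι] (hB : ∀ i j, 0 ≤ B i j)
    (hirr : ∀ i j, ∃ n, 0 < (B ^ n) i j) :
    ∃ N, ∀ i j, 0 < (∑ n ∈ Finset.range N, B ^ n) i j := by
  choose e he using hirr
  refine ⟨Finset.univ.sup (fun p : ι × ι => e p.1 p.2) + 1, fun i j => ?_⟩
  rw [Matrix.sum_apply]
  refine Finset.sum_pos' (fun n _ => pow_apply_nonneg hB n i j) ⟨e i j, ?_, he i j⟩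
  exact Finset.mem_range_succ_iff.2 (Finset.le_sup (f := fun p : ι × ι => e p.1 p.2)
    (Finset.mem_univ (i, j)))

theorem mulVec_pos {C : Matrix ι ι ℝ} (hC : ∀ i j, 0 < C i j) {x : ι → ℝ} (hx : 0 ≤ x)
    (hx₀ : x ≠ 0) (i : ι) : 0 < (C *ᵥ x) i := by
  obtain ⟨j, hj⟩ := Function.ne_iff.1 hx₀
  exact Finset.sum_pos' (fun l _ => mul_nonneg (hC i l).le (hx l))
    ⟨j, Finset.mem_univ j, mul_pos (hC i j) ((hx j).lt_of_ne' hj)⟩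

theorem exists_apply_pos_of_irreducible [DecidableEq ι] (hB : ∀ i j, 0 ≤ B i j)
    (hirr : ∀ i j, ∃ n, 0 < (B ^ n) i j) {p q : ι} (hpq : 0 < B p q) (i : ι) :
    ∃ j, 0 < B i j := by
  rcases eq_or_ne i p with rfl | hip
  · exact ⟨q, hpq⟩
  obtain ⟨n, hn⟩ := hirr i p
  cases n with
  | zero => simp [one_apply_ne hip] at hn
  | succ n =>
    rw [pow_succ', mul_apply] at hn
    obtain ⟨j, -, hj⟩ := (Finset.sum_pos_iff_of_nonneg
      fun j _ => mul_nonneg (hB i j) (pow_apply_nonneg hB n j p)).1 hn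
    exact ⟨j, (hB i j).lt_of_ne fun h => by simp [← h] at hj⟩

section CollatzWielandt

variable [Nonempty ι]

noncomputable def collatzWielandt (B : Matrix ι ι ℝ) (x : ι → ℝ) : ℝ :=
  Finset.univ.inf' Finset.univ_nonempty fun i => (B *ᵥ x) i / x i

theorem collatzWielandt_mul_le {x : ι → ℝ} {i : ι} (hx : 0 < x i) :
    collatzWielandt B x * x i ≤ (B *ᵥ x) i :=
  (le_div_iff₀ hx).1 (Finset.inf'_le _ (Finset.mem_univ i))

theorem lt_collatzWielandt {x : ι → ℝ} (hx : ∀ i, 0 < x i) {r : ℝ}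
    (h : ∀ i, r * x i < (B *ᵥ x) i) : r < collatzWielandt B x :=
  (Finset.lt_inf'_iff _).2 fun i _ => (lt_div_iff₀ (hx i)).2 (h i)

theorem collatzWielandt_smul (B : Matrix ι ι ℝ) (x : ι → ℝ) {c : ℝ} (hc : c ≠ 0) :
    collatzWielandt B (c • x) = collatzWielandt B x := by
  simp only [collatzWielandt, mulVec_smul, Pi.smul_apply, smul_eq_mul, mul_div_mul_left _ _ hc]

theorem continuousOn_collatzWielandt (B : Matrix ι ι ℝ) :
    ContinuousOn (collatzWielandt B) {x | ∀ i, 0 < x i} := by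
  refine ContinuousOn.finset_inf'_apply _ fun i _ => ContinuousOn.div ?_ ?_ fun x hx => (hx i).ne'
  · exact ((continuous_apply i).comp (continuous_const.matrix_mulVec continuous_id)).continuousOn
  · exact (continuous_apply i).continuousOn

theorem exists_pos_eigenvector [DecidableEq ι] (hB : ∀ i j, 0 ≤ B i j)
    (hirr : ∀ i j, ∃ n, 0 < (B ^ n) i j) :
    ∃ r : ℝ, ∃ z : ι → ℝ, (∀ i, 0 < z i) ∧ B *ᵥ z = r • z := by
  obtain ⟨N, hC⟩ := exists_sum_range_pow_pos hB hirr
  set C := ∑ n ∈ Finset.range N, B ^ n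
  have hCB : C * B = B * C := Commute.sum_left _ _ _ fun n _ => (Commute.self_pow B n).symm
  have hCpos {x : ι → ℝ} (hx : 0 ≤ x) (hx₀ : x ≠ 0) : ∀ i, 0 < (C *ᵥ x) i := mulVec_pos hC hx hx₀
  have hCu : ∀ u ∈ stdSimplex ℝ ι, ∀ i, 0 < (C *ᵥ u) i :=
    fun u hu => hCpos hu.1 fun h => by simpa [h] using hu.2
  -- On `C '' stdSimplex` all vectors are positive, so the Collatz–Wielandt function is continuous.
  obtain ⟨u, hu, hmax⟩ := (isCompact_stdSimplex ℝ ι).exists_isMaxOn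
    ⟨_, single_mem_stdSimplex ℝ (Classical.arbitrary ι)⟩
    ((continuousOn_collatzWielandt B).comp
      (continuous_const.matrix_mulVec continuous_id).continuousOn hCu)
  set z := C *ᵥ u
  set r := collatzWielandt B z
  have hz : ∀ i, 0 < z i := hCu u hu
  refine ⟨r, z, hz, ?_⟩
  by_contra hne
  -- `C` is positive and commutes with `B`, so `r z ≤ B z`, `r z ≠ B z` give `r (C z) < B (C z)`.
  have hy : ∀ i, r * (C *ᵥ z) i < (B *ᵥ (C *ᵥ z)) i := by
    intro i
    have hd : 0 ≤ B *ᵥ z - r • z := fun j => by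
      simpa [mul_comm] using collatzWielandt_mul_le (B := B) (hz j)
    have := hCpos hd (sub_ne_zero.2 hne) i
    rwa [mulVec_sub, mulVec_smul, mulVec_mulVec, hCB, ← mulVec_mulVec, Pi.sub_apply, sub_pos,
      Pi.smul_apply, smul_eq_mul] at this
  have hs : 0 < ∑ i, z i := Finset.sum_pos (fun i _ => hz i) Finset.univ_nonempty
  have hv : (∑ i, z i)⁻¹ • z ∈ stdSimplex ℝ ι :=
    ⟨fun i => mul_nonneg (inv_nonneg.2 hs.le) (hz i).le, by simp [← Finset.mul_sum, hs.ne']⟩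
  have hle : collatzWielandt B (C *ᵥ ((∑ i, z i)⁻¹ • z)) ≤ r := hmax hv
  rw [mulVec_smul, collatzWielandt_smul _ _ (inv_ne_zero hs.ne')] at hle
  have hCz : ∀ i, 0 < (C *ᵥ z) i :=
    hCpos (fun i => (hz i).le) fun h => (hz (Classical.arbitrary ι)).ne' (congrFun h _)
  exact hle.not_gt (lt_collatzWielandt hCz hy)

end CollatzWielandt

theorem pos_of_mulVec_eq_smul [Nonempty ι] (hB : ∀ i j, 0 ≤ B i j)
    (hrow : ∀ i, ∃ j, 0 < B i j) {z : ι → ℝ} (hz : ∀ i, 0 < z i) {r : ℝ}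
    (hBz : B *ᵥ z = r • z) : 0 < r := by
  let i := Classical.arbitrary ι
  obtain ⟨j, hj⟩ := hrow i
  have hBzi : 0 < (B *ᵥ z) i := Finset.sum_pos' (fun l _ => mul_nonneg (hB i l) (hz l).le)
    ⟨j, Finset.mem_univ j, mul_pos hj (hz j)⟩
  rw [hBz, Pi.smul_apply, smul_eq_mul] at hBzi
  exact pos_of_mul_pos_left hBzi (hz i).le

theorem abs_le_of_mem_spectrum [DecidableEq ι] (hB : ∀ i j, 0 ≤ B i j) {w : ι → ℝ}
    (hw : ∀ i, 0 < w i) {c : ℝ} (hc : B *ᵥ w ≤ c • w) {μ : ℝ} (hμ : μ ∈ spectrum ℝ B) :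
    |μ| ≤ c := by
  obtain ⟨v, hv, hBv⟩ := mem_spectrum_iff_exists_mulVec_eq_smul.1 hμ
  obtain ⟨j, hj⟩ := Function.ne_iff.1 hv
  obtain ⟨i, -, hi⟩ := Finset.univ.exists_max_image (fun i => |v i| / w i) ⟨j, Finset.mem_univ j⟩
  set t := |v i| / w i
  have hvt : ∀ l, |v l| ≤ t * w l := fun l => (div_le_iff₀ (hw l)).1 (hi l (Finset.mem_univ l))
  have ht : 0 < t := pos_of_mul_pos_left ((abs_pos.2 hj).trans_le (hvt j)) (hw j).le
  have hvi : |v i| = t * w i := (div_mul_cancel₀ _ (hw i).ne').symm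
  refine le_of_mul_le_mul_right ?_ (mul_pos ht (hw i))
  calc |μ| * (t * w i) = |(B *ᵥ v) i| := by rw [hBv, ← hvi, Pi.smul_apply, smul_eq_mul, abs_mul]
    _ ≤ ∑ l, B i l * |v l| := (Finset.abs_sum_le_sum_abs _ _).trans_eq <|
        Finset.sum_congr rfl fun l _ => by rw [abs_mul, abs_of_nonneg (hB i l)]
    _ ≤ ∑ l, B i l * (t * w l) := Finset.sum_le_sum fun l _ => by gcongr; exacts [hB i l, hvt l]
    _ = t * (B *ᵥ w) i := by
        simp only [mulVec, dotProduct, Finset.mul_sum]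
        exact Finset.sum_congr rfl fun l _ => mul_left_comm _ _ _
    _ ≤ t * (c * w i) := mul_le_mul_of_nonneg_left (hc i) ht.le
    _ = c * (t * w i) := mul_left_comm _ _ _

theorem sSup_abs_spectrum_eq [DecidableEq ι] [Nonempty ι] (hB : ∀ i j, 0 ≤ B i j)
    {z : ι → ℝ} (hz : ∀ i, 0 < z i) {r : ℝ} (hr : 0 ≤ r) (hBz : B *ᵥ z = r • z) :
    sSup {s | ∃ μ ∈ spectrum ℝ B, s = |μ|} = r := by
  have hr_mem : r ∈ spectrum ℝ B := mem_spectrum_iff_exists_mulVec_eq_smul.2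
    ⟨z, fun h => (hz (Classical.arbitrary ι)).ne' (congrFun h _), hBz⟩
  have hbound : ∀ s ∈ {s | ∃ μ ∈ spectrum ℝ B, s = |μ|}, s ≤ r := by
    rintro _ ⟨μ, hμ, rfl⟩
    exact abs_le_of_mem_spectrum hB hz hBz.le hμ
  exact le_antisymm (csSup_le ⟨r, r, hr_mem, (abs_of_nonneg hr).symm⟩ hbound)
    (le_csSup ⟨r, hbound⟩ ⟨r, hr_mem, (abs_of_nonneg hr).symm⟩)

theorem mulVec_rpow_mul_rpow_le {A A₀ A₁ : Matrix ι ι ℝ} {a b : ℝ} (ha : 0 ≤ a) (hb : 0 ≤ b)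
    (hab : a + b = 1) (hA₀ : ∀ i j, 0 ≤ A₀ i j) (hA₁ : ∀ i j, 0 ≤ A₁ i j)
    (hA : ∀ i j, A i j ≤ A₀ i j ^ a * A₁ i j ^ b) {z₀ z₁ : ι → ℝ} (hz₀ : 0 ≤ z₀) (hz₁ : 0 ≤ z₁)
    {r₀ r₁ : ℝ} (hr₀ : 0 ≤ r₀) (hr₁ : 0 ≤ r₁) (h₀ : A₀ *ᵥ z₀ ≤ r₀ • z₀)
    (h₁ : A₁ *ᵥ z₁ ≤ r₁ • z₁) :
    (A *ᵥ fun j => z₀ j ^ a * z₁ j ^ b) ≤ (r₀ ^ a * r₁ ^ b) • fun j => z₀ j ^ a * z₁ j ^ b := by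
  intro i
  have hAz₀ : 0 ≤ fun j => A₀ i j * z₀ j := fun j => mul_nonneg (hA₀ i j) (hz₀ j)
  have hAz₁ : 0 ≤ fun j => A₁ i j * z₁ j := fun j => mul_nonneg (hA₁ i j) (hz₁ j)
  calc ∑ j, A i j * (z₀ j ^ a * z₁ j ^ b)
      ≤ ∑ j, (A₀ i j * z₀ j) ^ a * (A₁ i j * z₁ j) ^ b := by
        refine Finset.sum_le_sum fun j _ => ?_
        rw [Real.mul_rpow (hA₀ i j) (hz₀ j), Real.mul_rpow (hA₁ i j) (hz₁ j),
          mul_mul_mul_comm]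
        exact mul_le_mul_of_nonneg_right (hA i j)
          (mul_nonneg (Real.rpow_nonneg (hz₀ j) a) (Real.rpow_nonneg (hz₁ j) b))
    _ ≤ (∑ j, A₀ i j * z₀ j) ^ a * (∑ j, A₁ i j * z₁ j) ^ b :=
        Finset.sum_rpow_mul_rpow_le hAz₀ hAz₁ ha hb hab
    _ ≤ (r₀ * z₀ i) ^ a * (r₁ * z₁ i) ^ b :=
        mul_le_mul (Real.rpow_le_rpow (Finset.sum_nonneg fun j _ => hAz₀ j) (h₀ i) ha)
          (Real.rpow_le_rpow (Finset.sum_nonneg fun j _ => hAz₁ j) (h₁ i) hb)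
          (Real.rpow_nonneg (Finset.sum_nonneg fun j _ => hAz₁ j) b)
          (Real.rpow_nonneg (mul_nonneg hr₀ (hz₀ i)) a)
    _ = r₀ ^ a * r₁ ^ b * (z₀ i ^ a * z₁ i ^ b) := by
        rw [Real.mul_rpow hr₀ (hz₀ i), Real.mul_rpow hr₁ (hz₁ i), mul_mul_mul_comm]

end Matrix

theorem integral_exp_neg_mul_le_rpow_mul_rpow {μ : Measure ℝ} {θ₀ θ₁ a b : ℝ}
    (h₀ : Integrable (fun x => Real.exp (-θ₀ * x)) μ)
    (h₁ : Integrable (fun x => Real.exp (-θ₁ * x)) μ) (ha : 0 ≤ a) (hb : 0 ≤ b)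
    (hab : a + b = 1) :
    ∫ x, Real.exp (-(a * θ₀ + b * θ₁) * x) ∂μ ≤
      (∫ x, Real.exp (-θ₀ * x) ∂μ) ^ a * (∫ x, Real.exp (-θ₁ * x) ∂μ) ^ b := by
  calc ∫ x, Real.exp (-(a * θ₀ + b * θ₁) * x) ∂μ
      = ∫ x, Real.exp (-θ₀ * x) ^ a * Real.exp (-θ₁ * x) ^ b ∂μ := by
        congr 1 with x
        rw [← Real.exp_mul, ← Real.exp_mul, ← Real.exp_add]
        ring_nf
    _ ≤ _ := integral_rpow_mul_rpow_le (.of_forall fun x => (Real.exp_pos _).le)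
        (.of_forall fun x => (Real.exp_pos _).le) h₀ h₁ ha hb hab

theorem convexOn_log_of_le_rpow_mul_rpow {E : Type*} [AddCommGroup E] [Module ℝ E] {s : Set E}
    (hs : Convex ℝ s) {f : E → ℝ} (hf : ∀ x ∈ s, 0 < f x)
    (h : ∀ x ∈ s, ∀ y ∈ s, ∀ a b : ℝ, 0 < a → 0 < b → a + b = 1 →
      f (a • x + b • y) ≤ f x ^ a * f y ^ b) :
    ConvexOn ℝ s fun x => Real.log (f x) := by
  refine convexOn_iff_forall_pos.2 ⟨hs, fun x hx y hy a b ha hb hab => ?_⟩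
  calc Real.log (f (a • x + b • y))
      ≤ Real.log (f x ^ a * f y ^ b) :=
        Real.log_le_log (hf _ (hs hx hy ha.le hb.le hab)) (h x hx y hy a b ha hb hab)
    _ = a • Real.log (f x) + b • Real.log (f y) := by
        rw [Real.log_mul (Real.rpow_pos_of_pos (hf x hx) a).ne'
          (Real.rpow_pos_of_pos (hf y hy) b).ne', Real.log_rpow (hf x hx),
          Real.log_rpow (hf y hy), smul_eq_mul, smul_eq_mul]

theorem stmt14_general (k : ℕ) [NeZero k] (m : Fin k → Fin k → Measure ℝ)
    (A : ℝ → Matrix (Fin k) (Fin k) ℝ)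
    (hint : ∀ (θ : ℝ) i j, Integrable (fun x => Real.exp (-θ * x)) (m i j))
    (hA : ∀ (θ : ℝ) i j, A θ i j = ∫ x, Real.exp (-θ * x) ∂(m i j))
    (hirr : ∀ (θ : ℝ) i j, ∃ n : ℕ, 0 < ((A θ) ^ n) i j)
    (hnz : ¬ ∀ i j, m i j ({0}ᶜ) = 0) :
    ConvexOn ℝ univ (fun θ : ℝ =>
      Real.log (sSup {r : ℝ | ∃ lam ∈ spectrum ℝ (A θ), r = |lam|})) := by
  have hA₀ : ∀ θ i j, 0 ≤ A θ i j := fun θ i j =>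
    (hA θ i j).symm ▸ integral_nonneg fun x => (Real.exp_pos _).le
  obtain ⟨p, q, hpq⟩ : ∃ p q, m p q ≠ 0 := by
    push Not at hnz
    obtain ⟨p, q, h⟩ := hnz
    exact ⟨p, q, fun h₀ => h (by simp [h₀])⟩
  have hrow (θ : ℝ) : ∀ i, ∃ j, 0 < A θ i j := by
    have : NeZero (m p q) := ⟨hpq⟩
    exact exists_apply_pos_of_irreducible (hA₀ θ) (hirr θ)
      ((hA θ p q).symm ▸ integral_exp_pos (hint θ p q))
  choose r z hz hAz using fun θ => exists_pos_eigenvector (hA₀ θ) (hirr θ)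
  have hr (θ : ℝ) : 0 < r θ := pos_of_mulVec_eq_smul (hA₀ θ) (hrow θ) (hz θ) (hAz θ)
  simp_rw [fun θ => sSup_abs_spectrum_eq (hA₀ θ) (hz θ) (hr θ).le (hAz θ)]
  refine convexOn_log_of_le_rpow_mul_rpow convex_univ (fun θ _ => hr θ)
    fun θ₀ _ θ₁ _ a b ha hb hab => ?_
  have hentry : ∀ i j, A (a • θ₀ + b • θ₁) i j ≤ A θ₀ i j ^ a * A θ₁ i j ^ b := fun i j => by
    simpa only [hA, smul_eq_mul] using
      integral_exp_neg_mul_le_rpow_mul_rpow (hint θ₀ i j) (hint θ₁ i j) ha.le hb.le hab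
  have hw : ∀ i, 0 < z θ₀ i ^ a * z θ₁ i ^ b := fun i =>
    mul_pos (Real.rpow_pos_of_pos (hz θ₀ i) a) (Real.rpow_pos_of_pos (hz θ₁ i) b)
  calc r (a • θ₀ + b • θ₁) ≤ |r (a • θ₀ + b • θ₁)| := le_abs_self _
    _ ≤ r θ₀ ^ a * r θ₁ ^ b := abs_le_of_mem_spectrum (hA₀ _) hw
      (mulVec_rpow_mul_rpow_le ha.le hb.le hab (hA₀ θ₀) (hA₀ θ₁) hentry (fun i => (hz θ₀ i).le)
        (fun i => (hz θ₁ i).le) (hr θ₀).le (hr θ₁).le (hAz θ₀).le (hAz θ₁).le)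
      (mem_spectrum_iff_exists_mulVec_eq_smul.2 ⟨_, fun h => (hz _ 0).ne' (congrFun h _), hAz _⟩)

/-- Log-convexity of the Perron root of a family of irreducible nonnegative matrices
whose entries are Laplace transforms `A(θ)_{ij} = ∫ e^{-θx} m_{ij}(dx)` of finite
measures (not all concentrated at `0`): `θ ↦ log ρ(A(θ))` is convex, where
`ρ(A(θ)) = sup{|λ| : λ ∈ spectrum(A(θ))}` is the Perron–Frobenius eigenvalue. -/
theorem stmt14 (k : ℕ) [NeZero k] (m : Fin k → Fin k → Measure ℝ)
    [∀ i j, IsFiniteMeasure (m i j)]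
    (A : ℝ → Matrix (Fin k) (Fin k) ℝ)
    (hint : ∀ (θ : ℝ) i j, Integrable (fun x => Real.exp (-θ * x)) (m i j))
    (hA : ∀ (θ : ℝ) i j, A θ i j = ∫ x, Real.exp (-θ * x) ∂(m i j))
    (hirr : ∀ (θ : ℝ) i j, ∃ n : ℕ, 0 < ((A θ) ^ n) i j)
    (hnz : ¬ ∀ i j, m i j ({0}ᶜ) = 0) :
    ConvexOn ℝ univ (fun θ : ℝ =>
      Real.log (sSup {r : ℝ | ∃ lam ∈ spectrum ℝ (A θ), r = |lam|})) :=
  stmt14_general k m A hint hA hirr hnz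
end
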